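/- arXiv:1303.6198 — 2 statements merged into one kernel-verified Lean document; each statement's English description precedes it below -/
import Mathlib

section
/- A topological dynamical system (X,f) on a compact metric space is topologically weakly mixing if and only if for every pair of nonempty open sets U,V ⊆ X, the hitting-time set n_f(U,V) = {n ∈ ℤ₊ : U ∩ f⁻ⁿ(V) ≠ ∅} is thick (contains arbitrarily long runs of consecutive integers). -/
open Filter Topology

variable {X : Type*} [MetricSpace X]

/-- The limsup of the distance between the orbits of `x` and `y`. -/
noncomputable def limsupDist (f : X → X) (x y : X) : ℝ :=
  Filter.limsup (fun n : ℕ => dist (f^[n] x) (f^[n] y)) Filter.atTop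

/-- The (first) Lyapunov number `L_r`. -/
noncomputable def Lr (f : X → X) : ℝ :=
  sSup {ε : ℝ | ∀ x : X, ∀ U ∈ 𝓝 x, ∃ y ∈ U, ∃ n : ℕ, ε < dist (f^[n] x) (f^[n] y)}

/-- The second Lyapunov number `L_d`. -/
noncomputable def Ld (f : X → X) : ℝ :=
  sSup {ε : ℝ | ∀ U : Set X, IsOpen U → U.Nonempty →
    ∃ x ∈ U, ∃ y ∈ U, ∃ n : ℕ, 1 ≤ n ∧ ε < dist (f^[n] x) (f^[n] y)}

/-- The limsup version `L̄_r` of the first Lyapunov number. -/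
noncomputable def Lrbar (f : X → X) : ℝ :=
  sSup {ε : ℝ | ∀ x : X, ∀ U : Set X, IsOpen U → x ∈ U →
    ∃ y ∈ U, ε < limsupDist f x y}

/-- The limsup version `L̄_d` of the second Lyapunov number. -/
noncomputable def Ldbar (f : X → X) : ℝ :=
  sSup {ε : ℝ | ∀ U : Set X, IsOpen U → U.Nonempty →
    ∃ x ∈ U, ∃ y ∈ U, ε < limsupDist f x y}

/-- Sensitive dependence on initial conditions. -/
def Sensitive (f : X → X) : Prop :=
  ∃ ε > (0 : ℝ), ∀ x : X, ∀ U ∈ 𝓝 x, ∃ y ∈ U, ∃ n : ℕ, ε < dist (f^[n] x) (f^[n] y)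

/-- Topological transitivity (some hitting time for each pair of opene sets). -/
def TopTransitive {Y : Type*} [TopologicalSpace Y] (f : Y → Y) : Prop :=
  ∀ U V : Set Y, IsOpen U → U.Nonempty → IsOpen V → V.Nonempty →
    ∃ n : ℕ, (U ∩ f^[n] ⁻¹' V).Nonempty

/-- Topological weak mixing: the product system is topologically transitive. -/
def WeaklyMixing {Y : Type*} [TopologicalSpace Y] (f : Y → Y) : Prop :=
  TopTransitive (fun p : Y × Y => (f p.1, f p.2))

/-- A point whose forward orbit is dense. -/
def TransitivePoint (f : X → X) (x : X) : Prop :=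
  Dense (Set.range fun n : ℕ => f^[n] x)

/-- A minimal set: nonempty, closed, invariant, and every orbit inside it is dense in it. -/
def IsMinimalSet (f : X → X) (M : Set X) : Prop :=
  M.Nonempty ∧ IsClosed M ∧ Set.MapsTo f M M ∧
    ∀ y ∈ M, M ⊆ closure (Set.range fun n : ℕ => f^[n] y)

/-- A minimal point: a point lying in some minimal set. -/
def MinimalPoint (f : X → X) (x : X) : Prop :=
  ∃ M : Set X, IsMinimalSet f M ∧ x ∈ M

/-- A syndetic subset of ℤ₊ : bounded gaps. -/
def Syndetic (S : Set ℕ) : Prop :=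
  ∃ N : ℕ, ∀ i : ℕ, ∃ n ∈ S, i ≤ n ∧ n ≤ i + N

/-- A thick subset of ℤ₊ : arbitrarily long runs of consecutive integers. -/
def Thick (S : Set ℕ) : Prop :=
  ∀ k : ℕ, ∃ n : ℕ, ∀ m ≤ k, n + m ∈ S

private lemma iterProd (f : X → X) : ∀ (n : ℕ) (p : X × X),
    (fun p : X × X => (f p.1, f p.2))^[n] p = (f^[n] p.1, f^[n] p.2) := by
  intro n
  induction n with
  | zero => intro p; simp
  | succ n ih =>
    intro p
    rw [Function.iterate_succ_apply, Function.iterate_succ_apply,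
        Function.iterate_succ_apply]
    exact ih _

private lemma wm_basic {f : X → X} (h : WeaklyMixing f)
    {A1 B1 A2 B2 : Set X} (hA1 : IsOpen A1) (hA1n : A1.Nonempty)
    (hB1 : IsOpen B1) (hB1n : B1.Nonempty)
    (hA2 : IsOpen A2) (hA2n : A2.Nonempty)
    (hB2 : IsOpen B2) (hB2n : B2.Nonempty) :
    ∃ n, (A1 ∩ f^[n] ⁻¹' A2).Nonempty ∧ (B1 ∩ f^[n] ⁻¹' B2).Nonempty := by
  obtain ⟨n, p, hp⟩ := h (A1 ×ˢ B1) (A2 ×ˢ B2) (hA1.prod hB1) (hA1n.prod hB1n)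
    (hA2.prod hB2) (hA2n.prod hB2n)
  have hmem := hp.2
  rw [Set.mem_preimage, iterProd] at hmem
  exact ⟨n, ⟨p.1, hp.1.1, hmem.1⟩, ⟨p.2, hp.1.2, hmem.2⟩⟩

private lemma wm_trans {f : X → X} (h : WeaklyMixing f) : TopTransitive f := by
  intro U V hU hUn hV hVn
  obtain ⟨n, h1, _⟩ := wm_basic h hU hUn hU hUn hV hVn hV hVn
  exact ⟨n, h1⟩

private lemma wm_denseRange {f : X → X} (h : WeaklyMixing f) : DenseRange f := by
  by_contra hd
  have : ∃ W : Set X, IsOpen W ∧ W.Nonempty ∧ ∀ x, f x ∉ W := by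
    rw [DenseRange, dense_iff_inter_open] at hd
    push_neg at hd
    obtain ⟨W, hW, hWn, hWd⟩ := hd
    exact ⟨W, hW, hWn, fun x hx => Set.eq_empty_iff_forall_notMem.mp hWd (f x) ⟨hx, Set.mem_range_self x⟩⟩
  obtain ⟨W, hW, hWn, hWf⟩ := this
  rcases subsingleton_or_nontrivial X with hs | hs
  · obtain ⟨w, hw⟩ := hWn
    exact hWf w (by rwa [Subsingleton.elim (f w) w])
  · obtain ⟨a, b, hab⟩ := hs
    obtain ⟨P, Q, hP, hQ, haP, hbQ, hPQ⟩ := t2_separation hab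
    obtain ⟨n, ⟨x, hx1, hx2⟩, ⟨y, hy1, hy2⟩⟩ :=
      wm_basic h hW hWn hP ⟨a, haP⟩ hW hWn hQ ⟨b, hbQ⟩
    rcases Nat.eq_zero_or_pos n with rfl | hn
    · simp only [Function.iterate_zero, Set.preimage_id, id] at hy2
      exact Set.disjoint_left.mp hPQ hy1 hy2
    · obtain ⟨m, rfl⟩ := Nat.exists_eq_succ_of_ne_zero hn.ne'
      have hxW : f^[m + 1] x ∈ W := hx2
      rw [Function.iterate_succ_apply'] at hxW
      exact hWf _ hxW

private lemma wm_preimage_nonempty {f : X → X} (hf : Continuous f) (h : WeaklyMixing f)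
    {V : Set X} (hV : IsOpen V) (hVn : V.Nonempty) (m : ℕ) :
    (f^[m] ⁻¹' V).Nonempty := by
  have hd : DenseRange (f^[m]) := by
    induction m with
    | zero => rw [Function.iterate_zero]; exact denseRange_id
    | succ k ih =>
      rw [Function.iterate_succ]
      exact DenseRange.comp ih (wm_denseRange h) (hf.iterate k)
  obtain ⟨x, hx⟩ := hd.exists_mem_open hV hVn
  exact ⟨x, hx⟩

private lemma wm_pair {f : X → X} (hf : Continuous f) (h : WeaklyMixing f)
    {A1 B1 A2 B2 : Set X} (hA1 : IsOpen A1) (hA1n : A1.Nonempty)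
    (hB1 : IsOpen B1) (hB1n : B1.Nonempty)
    (hA2 : IsOpen A2) (hA2n : A2.Nonempty)
    (hB2 : IsOpen B2) (hB2n : B2.Nonempty) :
    ∃ A B : Set X, IsOpen A ∧ A.Nonempty ∧ IsOpen B ∧ B.Nonempty ∧
      ∀ m, (A ∩ f^[m] ⁻¹' B).Nonempty →
        (A1 ∩ f^[m] ⁻¹' B1).Nonempty ∧ (A2 ∩ f^[m] ⁻¹' B2).Nonempty := by
  obtain ⟨n, hn1, hn2⟩ := wm_basic h hA1 hA1n hB1 hB1n hA2 hA2n hB2 hB2n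
  refine ⟨A1 ∩ f^[n] ⁻¹' A2, B1 ∩ f^[n] ⁻¹' B2,
    hA1.inter (hA2.preimage (hf.iterate n)), hn1,
    hB1.inter (hB2.preimage (hf.iterate n)), hn2, ?_⟩
  rintro m ⟨z, ⟨hz1, hz2⟩, hz3⟩
  have hz3' : f^[m] z ∈ B1 ∩ f^[n] ⁻¹' B2 := hz3
  refine ⟨⟨z, hz1, hz3'.1⟩, ⟨f^[n] z, hz2, ?_⟩⟩
  have hmem : f^[n] (f^[m] z) ∈ B2 := hz3'.2
  rw [← Function.iterate_add_apply] at hmem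
  show f^[m] (f^[n] z) ∈ B2
  rw [← Function.iterate_add_apply]
  rwa [Nat.add_comm m n]

private lemma wm_chain {f : X → X} (hf : Continuous f) (h : WeaklyMixing f)
    {U V : Set X} (hU : IsOpen U) (hUn : U.Nonempty) (hV : IsOpen V) (hVn : V.Nonempty)
    (k : ℕ) :
    ∃ A B : Set X, IsOpen A ∧ A.Nonempty ∧ IsOpen B ∧ B.Nonempty ∧
      ∀ m, (A ∩ f^[m] ⁻¹' B).Nonempty →
        ∀ j ≤ k, (U ∩ f^[m + j] ⁻¹' V).Nonempty := by
  induction k with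
  | zero =>
    refine ⟨U, V, hU, hUn, hV, hVn, ?_⟩
    intro m hm j hj
    have hj0 : j = 0 := Nat.le_zero.mp hj
    subst hj0
    simpa using hm
  | succ k ih =>
    obtain ⟨A, B, hA, hAn, hB, hBn, hprop⟩ := ih
    have hVk : IsOpen (f^[k + 1] ⁻¹' V) := hV.preimage (hf.iterate (k + 1))
    have hVkn := wm_preimage_nonempty hf h hV hVn (k + 1)
    obtain ⟨A', B', hA', hA'n, hB', hB'n, hprop'⟩ :=
      wm_pair hf h hA hAn hB hBn hU hUn hVk hVkn
    refine ⟨A', B', hA', hA'n, hB', hB'n, ?_⟩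
    intro m hm j hj
    obtain ⟨h1, h2⟩ := hprop' m hm
    rcases lt_or_eq_of_le hj with hj' | rfl
    · exact hprop m h1 j (Nat.lt_succ_iff.mp hj')
    · obtain ⟨x, hx1, hx2⟩ := h2
      refine ⟨x, hx1, ?_⟩
      show f^[m + (k + 1)] x ∈ V
      rw [Nat.add_comm, Function.iterate_add_apply]
      exact hx2

/-- Furstenberg's characterization: weak mixing iff all hitting-time sets are thick. -/
theorem stmt16 [CompactSpace X] (f : X → X) (hf : Continuous f) :
    WeaklyMixing f ↔ ∀ U V : Set X, IsOpen U → U.Nonempty → IsOpen V → V.Nonempty →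
      Thick {n : ℕ | (U ∩ f^[n] ⁻¹' V).Nonempty} := by
  constructor
  · intro h U V hU hUn hV hVn k
    obtain ⟨A, B, hA, hAn, hB, hBn, hprop⟩ := wm_chain hf h hU hUn hV hVn k
    obtain ⟨n, hn⟩ := wm_trans h A B hA hAn hB hBn
    exact ⟨n, fun m hm => hprop n hn m hm⟩
  · intro h U V hU hUn hV hVn
    obtain ⟨p, hp⟩ := hUn
    obtain ⟨q, hq⟩ := hVn
    obtain ⟨U1, U2, hU1, hU2, hp1, hp2, hUsub⟩ :=
      isOpen_prod_iff.mp hU p.1 p.2 (by simpa using hp)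
    obtain ⟨V1, V2, hV1, hV2, hq1, hq2, hVsub⟩ :=
      isOpen_prod_iff.mp hV q.1 q.2 (by simpa using hq)
    obtain ⟨a, ha⟩ := h U1 U2 hU1 ⟨p.1, hp1⟩ hU2 ⟨p.2, hp2⟩ 0
    have ha0 : (U1 ∩ f^[a] ⁻¹' U2).Nonempty := by simpa using ha 0 le_rfl
    obtain ⟨b, hb⟩ := h V1 V2 hV1 ⟨q.1, hq1⟩ hV2 ⟨q.2, hq2⟩ 0
    have hb0 : (V1 ∩ f^[b] ⁻¹' V2).Nonempty := by simpa using hb 0 le_rfl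
    have hWo : IsOpen (U1 ∩ f^[a] ⁻¹' U2) := hU1.inter (hU2.preimage (hf.iterate a))
    have hZo : IsOpen (V1 ∩ f^[b] ⁻¹' V2) := hV1.inter (hV2.preimage (hf.iterate b))
    set s := max a b with hs
    have hsa : a ≤ s := le_max_left a b
    have hsb : b ≤ s := le_max_right a b
    obtain ⟨n, hn⟩ := h _ _ hWo ha0 hZo hb0 s
    have hm1 : ((U1 ∩ f^[a] ⁻¹' U2) ∩ f^[n + (s - a)] ⁻¹' (V1 ∩ f^[b] ⁻¹' V2)).Nonempty :=
      hn (s - a) (Nat.sub_le s a)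
    have hm2 : ((U1 ∩ f^[a] ⁻¹' U2) ∩ f^[n + (s - b)] ⁻¹' (V1 ∩ f^[b] ⁻¹' V2)).Nonempty :=
      hn (s - b) (Nat.sub_le s b)
    obtain ⟨x, ⟨hxU1, _⟩, hxZ⟩ := hm1
    obtain ⟨y', ⟨_, hy'U2⟩, hy'Z⟩ := hm2
    have hxZ' : f^[n + (s - a)] x ∈ V1 ∩ f^[b] ⁻¹' V2 := hxZ
    have hy'Z' : f^[n + (s - b)] y' ∈ V1 ∩ f^[b] ⁻¹' V2 := hy'Z
    refine ⟨n + (s - a), (x, f^[a] y'), ⟨hUsub ⟨hxU1, hy'U2⟩, ?_⟩⟩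
    rw [Set.mem_preimage, iterProd]
    refine hVsub ⟨hxZ'.1, ?_⟩
    have h1 : f^[b] (f^[n + (s - b)] y') ∈ V2 := hy'Z'.2
    rw [← Function.iterate_add_apply] at h1
    show f^[n + (s - a)] (f^[a] y') ∈ V2
    rw [← Function.iterate_add_apply]
    have heq : n + (s - a) + a = b + (n + (s - b)) := by omega
    rwa [heq]
end

section
/- In a minimal dynamical system on a compact metric space that is also topologically weakly mixing, for every point x, every nonempty open set U, and every pair of nonempty open sets V₁, V₂, there exist y ∈ U and k ∈ ℤ₊ such that f^k(x) ∈ V₁ and f^k(y) ∈ V₂. Consequently L_r = diam(X). -/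
open Filter Topology

variable {X : Type*} [MetricSpace X]

section AuxStmt17

variable {X : Type*} [MetricSpace X]

private def NSet17 (f : X → X) (U V : Set X) : Set ℕ := {n | (U ∩ f^[n] ⁻¹' V).Nonempty}

private lemma surj_aux17 [CompactSpace X] [Nonempty X] (f : X → X) (hf : Continuous f)
    (hmin : ∀ x : X, TransitivePoint f x) : Function.Surjective f := by
  have hcl : IsClosed (f '' Set.univ) := (isCompact_univ.image hf).isClosed
  obtain ⟨z⟩ := ‹Nonempty X›
  have hsub : Set.range (fun n : ℕ => f^[n] (f z)) ⊆ f '' Set.univ := by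
    rintro _ ⟨n, rfl⟩
    exact ⟨f^[n] z, trivial, (Function.iterate_succ_apply' f n z).symm.trans
      (Function.iterate_succ_apply f n z)⟩
  have hu : (Set.univ : Set X) ⊆ f '' Set.univ := by
    calc (Set.univ : Set X) = closure (Set.range fun n : ℕ => f^[n] (f z)) :=
          ((hmin (f z)).closure_eq).symm
      _ ⊆ closure (f '' Set.univ) := closure_mono hsub
      _ = f '' Set.univ := hcl.closure_eq
  intro y
  obtain ⟨x, -, hx⟩ := hu (Set.mem_univ y)
  exact ⟨x, hx⟩

private lemma preimage_nonempty17 [CompactSpace X] [Nonempty X] (f : X → X) (hf : Continuous f)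
    (hmin : ∀ x : X, TransitivePoint f x) {V : Set X} (hV : V.Nonempty) (m : ℕ) :
    (f^[m] ⁻¹' V).Nonempty := by
  have hs : Function.Surjective f^[m] := (surj_aux17 f hf hmin).iterate m
  obtain ⟨v, hv⟩ := hV
  obtain ⟨z, hz⟩ := hs v
  exact ⟨z, by simp [Set.mem_preimage, hz, hv]⟩

private lemma syndetic_hit17 [CompactSpace X] (f : X → X) (hf : Continuous f)
    (hmin : ∀ x : X, TransitivePoint f x) {V : Set X} (hVo : IsOpen V) (hV : V.Nonempty)
    (x : X) : ∃ N : ℕ, ∀ i : ℕ, ∃ n ≤ N, f^[i + n] x ∈ V := by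
  have hcover : (Set.univ : Set X) ⊆ ⋃ n : ℕ, f^[n] ⁻¹' V := by
    intro z _
    obtain ⟨_, ⟨n, rfl⟩, hn⟩ := (hmin z).exists_mem_open hVo hV
    exact Set.mem_iUnion.mpr ⟨n, hn⟩
  obtain ⟨t, ht⟩ := isCompact_univ.elim_finite_subcover (fun n : ℕ => f^[n] ⁻¹' V)
    (fun n => hVo.preimage (hf.iterate n)) hcover
  refine ⟨t.sup id, fun i => ?_⟩
  obtain ⟨n, hnt, hn⟩ := Set.mem_iUnion₂.mp (ht (Set.mem_univ (f^[i] x)))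
  refine ⟨n, Finset.le_sup (f := id) hnt, ?_⟩
  rwa [Nat.add_comm, Function.iterate_add_apply]

private lemma prod_iter17 (f : X → X) (n : ℕ) (p : X × X) :
    (fun p : X × X => (f p.1, f p.2))^[n] p = (f^[n] p.1, f^[n] p.2) := by
  have h : (fun p : X × X => (f p.1, f p.2)) = Prod.map f f := rfl
  rw [h, Prod.map_iterate]; rfl

private lemma pair_lemma17 (f : X → X) (hf : Continuous f) (hwm : WeaklyMixing f)
    {U₁ V₁ U₂ V₂ : Set X} (hU₁o : IsOpen U₁) (hU₁ : U₁.Nonempty)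
    (hV₁o : IsOpen V₁) (hV₁ : V₁.Nonempty) (hU₂o : IsOpen U₂) (hU₂ : U₂.Nonempty)
    (hV₂o : IsOpen V₂) (hV₂ : V₂.Nonempty) :
    ∃ U V : Set X, IsOpen U ∧ U.Nonempty ∧ IsOpen V ∧ V.Nonempty ∧
      NSet17 f U V ⊆ NSet17 f U₁ U₂ ∩ NSet17 f V₁ V₂ := by
  obtain ⟨n, ⟨p, ⟨hp1, hp2⟩, hp3⟩⟩ := hwm (U₁ ×ˢ U₂) (V₁ ×ˢ V₂) (hU₁o.prod hU₂o)
    (hU₁.prod hU₂) (hV₁o.prod hV₂o) (hV₁.prod hV₂)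
  rw [Set.mem_preimage, prod_iter17] at hp3
  obtain ⟨hq1, hq2⟩ := hp3
  refine ⟨U₁ ∩ f^[n] ⁻¹' V₁, U₂ ∩ f^[n] ⁻¹' V₂,
    hU₁o.inter (hV₁o.preimage (hf.iterate n)), ⟨p.1, hp1, hq1⟩,
    hU₂o.inter (hV₂o.preimage (hf.iterate n)), ⟨p.2, hp2, hq2⟩, ?_⟩
  rintro m ⟨z, ⟨hz1, hz2⟩, hz3⟩
  obtain ⟨hz4, hz5⟩ := hz3
  refine ⟨⟨z, hz1, hz4⟩, ⟨f^[n] z, hz2, ?_⟩⟩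
  show f^[m] (f^[n] z) ∈ V₂
  rw [← Function.iterate_add_apply, Nat.add_comm, Function.iterate_add_apply]
  exact hz5

private lemma thick_lemma17 [CompactSpace X] [Nonempty X] (f : X → X) (hf : Continuous f)
    (hmin : ∀ x : X, TransitivePoint f x) (hwm : WeaklyMixing f)
    {U V : Set X} (hUo : IsOpen U) (hU : U.Nonempty) (hVo : IsOpen V) (hV : V.Nonempty)
    (k : ℕ) :
    ∃ U' V' : Set X, IsOpen U' ∧ U'.Nonempty ∧ IsOpen V' ∧ V'.Nonempty ∧
      ∀ n ∈ NSet17 f U' V', ∀ m ≤ k, n + m ∈ NSet17 f U V := by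
  induction k with
  | zero =>
    refine ⟨U, V, hUo, hU, hVo, hV, fun n hn m hm => ?_⟩
    interval_cases m; simpa using hn
  | succ k ih =>
    obtain ⟨Uk, Vk, hUko, hUk, hVko, hVk, hsub⟩ := ih
    obtain ⟨U', V', hU'o, hU', hV'o, hV', hsub'⟩ := pair_lemma17 f hf hwm
      hUko hUk hUo hU hVko hVk (hVo.preimage (hf.iterate (k+1)))
      (preimage_nonempty17 f hf hmin hV (k+1))
    refine ⟨U', V', hU'o, hU', hV'o, hV', fun n hn m hm => ?_⟩
    obtain ⟨h1, h2⟩ := hsub' hn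
    rcases Nat.lt_succ_iff_lt_or_eq.mp (Nat.lt_succ_of_le hm) with h | rfl
    · exact hsub n h1 m (Nat.lt_succ_iff.mp h)
    · obtain ⟨z, hz1, hz2⟩ := h2
      refine ⟨z, hz1, ?_⟩
      show f^[n + (k+1)] z ∈ V
      rw [Nat.add_comm, Function.iterate_add_apply]
      exact hz2

private lemma steer17 [CompactSpace X] (f : X → X) (hf : Continuous f)
    (hmin : ∀ x : X, TransitivePoint f x) (hwm : WeaklyMixing f)
    (x : X) (U V₁ V₂ : Set X) (hUo : IsOpen U) (hU : U.Nonempty)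
    (hV₁o : IsOpen V₁) (hV₁ : V₁.Nonempty) (hV₂o : IsOpen V₂) (hV₂ : V₂.Nonempty) :
    ∃ y ∈ U, ∃ k : ℕ, f^[k] x ∈ V₁ ∧ f^[k] y ∈ V₂ := by
  have : Nonempty X := ⟨x⟩
  obtain ⟨N, hN⟩ := syndetic_hit17 f hf hmin hV₁o hV₁ x
  obtain ⟨U', V', hU'o, hU', hV'o, hV', hthick⟩ :=
    thick_lemma17 f hf hmin hwm hUo hU hV₂o hV₂ N
  obtain ⟨n₀, p, ⟨hp1, hp2⟩, hp3⟩ := hwm (U' ×ˢ U') (V' ×ˢ V') (hU'o.prod hU'o)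
    (hU'.prod hU') (hV'o.prod hV'o) (hV'.prod hV')
  rw [Set.mem_preimage, prod_iter17] at hp3
  have hn₀ : n₀ ∈ NSet17 f U' V' := ⟨p.1, hp1, hp3.1⟩
  obtain ⟨m, hmN, hmV⟩ := hN n₀
  obtain ⟨y, hyU, hyV⟩ := hthick n₀ hn₀ m hmN
  exact ⟨y, hyU, n₀ + m, hmV, hyV⟩

end AuxStmt17

/-- In a minimal weakly mixing system, orbits can be steered simultaneously,
and consequently `L_r = diam X`. -/
theorem stmt17 [CompactSpace X] (f : X → X) (hf : Continuous f)
    (hmin : ∀ x : X, TransitivePoint f x) (hwm : WeaklyMixing f) :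
    (∀ x : X, ∀ U V₁ V₂ : Set X, IsOpen U → U.Nonempty →
        IsOpen V₁ → V₁.Nonempty → IsOpen V₂ → V₂.Nonempty →
        ∃ y ∈ U, ∃ k : ℕ, f^[k] x ∈ V₁ ∧ f^[k] y ∈ V₂) ∧
    Lr f = Metric.diam (Set.univ : Set X) := by
  constructor
  · exact fun x U V₁ V₂ hUo hU hV₁o hV₁ hV₂o hV₂ =>
      steer17 f hf hmin hwm x U V₁ V₂ hUo hU hV₁o hV₁ hV₂o hV₂
  · rcases isEmpty_or_nonempty X with hX | hX
    · have h1 : (Set.univ : Set X) = ∅ := Set.univ_eq_empty_iff.mpr hX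
      rw [h1, Metric.diam_empty, Lr]
      have h2 : {ε : ℝ | ∀ x : X, ∀ U ∈ 𝓝 x, ∃ y ∈ U, ∃ n : ℕ,
          ε < dist (f^[n] x) (f^[n] y)} = Set.univ := by
        ext ε; simp only [Set.mem_setOf_eq, Set.mem_univ, iff_true]
        exact fun x => (hX.false x).elim
      rw [h2, Real.sSup_univ]
    · set S := {ε : ℝ | ∀ x : X, ∀ U ∈ 𝓝 x, ∃ y ∈ U, ∃ n : ℕ,
        ε < dist (f^[n] x) (f^[n] y)} with hS
      have hdiam0 : 0 ≤ Metric.diam (Set.univ : Set X) := Metric.diam_nonneg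
      have hub : ∀ ε ∈ S, ε ≤ Metric.diam (Set.univ : Set X) := by
        intro ε hε
        obtain ⟨x⟩ := hX
        obtain ⟨y, -, n, hn⟩ := hε x Set.univ Filter.univ_mem
        exact le_trans hn.le (Metric.dist_le_diam_of_mem isCompact_univ.isBounded
          (Set.mem_univ _) (Set.mem_univ _))
      have hbdd : BddAbove S := ⟨Metric.diam (Set.univ : Set X), hub⟩
      have hmem : ∀ ε : ℝ, ε < Metric.diam (Set.univ : Set X) → ε ∈ S := by
        intro ε hε
        rcases lt_or_ge ε 0 with hε0 | hε0
        · intro x U hU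
          exact ⟨x, mem_of_mem_nhds hU, 0, by simpa using hε0⟩
        · -- find two points at distance > ε
          have hab : ∃ a b : X, ε < dist a b := by
            by_contra hcon
            push_neg at hcon
            exact absurd (Metric.diam_le_of_forall_dist_le hε0
              (fun a _ b _ => hcon a b)) (not_le.mpr hε)
          obtain ⟨a, b, hab⟩ := hab
          set δ := (dist a b - ε) / 3 with hδ
          have hδpos : 0 < δ := by rw [hδ]; linarith
          intro x U hU
          obtain ⟨U', hU'sub, hU'o, hxU'⟩ := mem_nhds_iff.mp hU
          obtain ⟨y, hyU', k, hk1, hk2⟩ := steer17 f hf hmin hwm x U'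
            (Metric.ball a δ) (Metric.ball b δ) hU'o ⟨x, hxU'⟩
            Metric.isOpen_ball ⟨a, Metric.mem_ball_self hδpos⟩
            Metric.isOpen_ball ⟨b, Metric.mem_ball_self hδpos⟩
          refine ⟨y, hU'sub hyU', k, ?_⟩
          have h1 : dist a (f^[k] x) < δ := by
            rw [dist_comm]; exact hk1
          have h2 : dist (f^[k] y) b < δ := hk2
          have h3 : dist a b ≤ dist a (f^[k] x) + dist (f^[k] x) (f^[k] y)
              + dist (f^[k] y) b := dist_triangle4 a (f^[k] x) (f^[k] y) b
          have := hε
          rw [hδ] at h1 h2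
          linarith
      rw [Lr, ← hS]
      refine le_antisymm (Real.sSup_le hub hdiam0) ?_
      by_contra hcon
      push_neg at hcon
      obtain ⟨ε, hε1, hε2⟩ := exists_between hcon
      exact absurd (le_csSup hbdd (hmem ε hε2)) (not_le.mpr hε1)
end
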